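/- Let n ≥ 1, m ≥ 1, let Ω ⊆ ℝ^n be open, let A be a real n×n matrix, and let Z(μ) = μ^m + Z_{m−1}μ^{m−1} + ⋯ + Z_0 be a monic real polynomial with constant coefficients. Call a tuple V = (V_0, …, V_{m−1}) of smooth functions V_j : Ω → ℝ a solution if there exists a map u : Ω → ℝ^n such that for every x ∈ Ω the identity (A + μI)·(Σ_{j=0}^{m−1} ∇V_j(x)μ^j) = Z(μ)·u(x) holds in ℝ^n[μ]. If V and W are solutions, then so is the tuple V*W defined pointwise by letting (V*W)_0(x), …, (V*W)_{m−1}(x) be the coefficients of the remainder of the polynomial (Σ_{j=0}^{m−1} V_j(x)μ^j)·(Σ_{j=0}^{m−1} W_j(x)μ^j) on division by the monic polynomial Z(μ). -/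

import Mathlib

open Polynomial

/-- The gradient of `f : ℝ^n → ℝ` at `x`: the vector of partial derivatives. -/
noncomputable def grad {n : ℕ} (f : (Fin n → ℝ) → ℝ) (x : Fin n → ℝ) : Fin n → ℝ :=
  fun i => fderiv ℝ f x (Pi.single i 1)

/-- `V = (V_0, …, V_{m−1})` is a solution of `(A + μI)∇V_μ ≡ 0 (mod Z)` on `Ω`:
the `V_k` are smooth on `Ω` and there is `u : Ω → ℝ^n` with
`(A + μI)·(Σ_k ∇V_k(x) μ^k) = Z(μ)·u(x)` (each row, as polynomials in `μ`). -/
def IsStarSolution (n m : ℕ) (Ω : Set (Fin n → ℝ)) (A : Matrix (Fin n) (Fin n) ℝ)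
    (Z : Polynomial ℝ) (V : ℕ → ((Fin n → ℝ) → ℝ)) : Prop :=
  (∀ k < m, ContDiffOn ℝ (⊤ : ℕ∞) (V k) Ω) ∧
  ∃ u : (Fin n → ℝ) → (Fin n → ℝ), ∀ x ∈ Ω, ∀ i : Fin n,
    (∑ j : Fin n, (C (A i j) + if i = j then X else 0) *
        (∑ k ∈ Finset.range m, C (grad (V k) x j) * X ^ k))
      = Z * C (u x i)

/-! Write `V_μ(x) = Σ_{k<m} V_k(x) μ^k`. Reduction modulo `Z` is linear, so every coefficient of
`(V*W)_μ` is a bilinear expression in the values of `V` and `W`, and the Leibniz rule gives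
`∇(V*W)_μ = (W_μ ∇V_μ + V_μ ∇W_μ) mod Z`. The matrix `A + μI` commutes with the scalar factors
`V_μ`, `W_μ`, so applied to this it gives, modulo `Z`, `W_μ Z u + V_μ Z w ≡ 0`. As `A + μI` has
degree one and remainders modulo `Z` have degree `< m`, the quotient by `Z` is a constant. -/

open Matrix

namespace Polynomial

section OfCoeffs

variable {R : Type*}

noncomputable def ofCoeffs [Semiring R] (m : ℕ) (c : ℕ → R) : R[X] :=
  ∑ k ∈ Finset.range m, C (c k) * X ^ k

theorem degree_ofCoeffs_lt [Semiring R] (m : ℕ) (c : ℕ → R) : (ofCoeffs m c).degree < m :=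
  (degree_sum_le _ _).trans_lt <| (Finset.sup_lt_iff (WithBot.bot_lt_coe m)).2 fun _ hk =>
    (degree_C_mul_X_pow_le _ _).trans_lt (WithBot.coe_lt_coe.2 (Finset.mem_range.1 hk))

theorem ofCoeffs_coeff [Semiring R] {m : ℕ} {p : R[X]} (hp : p.degree < m) :
    ofCoeffs m p.coeff = p := by
  rcases eq_or_ne p 0 with rfl | hp0
  · simp [ofCoeffs]
  · exact (p.as_sum_range_C_mul_X_pow' ((natDegree_lt_iff_degree_lt hp0).2 hp)).symm

theorem map_ofCoeffs_mul [CommSemiring R] {M : Type*} [AddCommMonoid M] [Module R M]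
    (ℓ : R[X] →ₗ[R] M) (m : ℕ) (c d : ℕ → R) :
    ℓ (ofCoeffs m c * ofCoeffs m d) =
      ∑ a ∈ Finset.range m, ∑ b ∈ Finset.range m, (c a * d b) • ℓ (X ^ (a + b)) := by
  simp only [ofCoeffs, Finset.sum_mul_sum, map_sum, ← map_smul]
  refine Finset.sum_congr rfl fun a _ => Finset.sum_congr rfl fun b _ => ?_
  rw [smul_eq_C_mul, C_mul, pow_add, mul_mul_mul_comm]

end OfCoeffs

section Division

variable {R : Type*} [CommRing R] {ι : Type*} [Fintype ι]

theorem dvd_mulVec_modByMonic (M : Matrix ι ι R[X]) (T : ι → R[X]) {Z : R[X]} {i : ι}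
    (h : Z ∣ (M *ᵥ T) i) : Z ∣ (M *ᵥ fun j => T j %ₘ Z) i := by
  have hsub : Z ∣ (M *ᵥ fun j => T j %ₘ Z) i - (M *ᵥ T) i := by
    rw [← Pi.sub_apply, ← mulVec_sub]
    exact Finset.dvd_sum fun j _ => dvd_mul_of_dvd_right (dvd_modByMonic_sub _ _) _
  simpa using dvd_add hsub h

theorem natDegree_mulVec_modByMonic_le (M : Matrix ι ι R[X]) (T : ι → R[X]) {Z : R[X]}
    (hZ : Z.Monic) {i : ι} (hM : ∀ j, (M i j).natDegree ≤ 1) :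
    ((M *ᵥ fun j => T j %ₘ Z) i).natDegree ≤ Z.natDegree := by
  refine natDegree_sum_le_of_forall_le _ _ fun j _ => ?_
  rcases eq_or_ne Z 1 with rfl | hZ1
  · simp [modByMonic_one]
  · have hlt := natDegree_modByMonic_lt (T j) hZ hZ1
    exact (natDegree_mul_le (p := M i j) (q := T j %ₘ Z)).trans (by have := hM j; omega)

theorem eq_mul_C_of_dvd_of_natDegree_le {Z S : R[X]} (hZ : Z.Monic) (hdvd : Z ∣ S)
    (hdeg : S.natDegree ≤ Z.natDegree) : ∃ c : R, S = Z * C c := by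
  refine ⟨(S /ₘ Z).coeff 0, ?_⟩
  have hq : (S /ₘ Z).natDegree = 0 := by rw [natDegree_divByMonic S hZ]; omega
  conv_lhs => rw [← modByMonic_add_div S Z, (modByMonic_eq_zero_iff_dvd hZ).2 hdvd, zero_add,
    eq_C_of_natDegree_eq_zero hq]

end Division

section Calculus

variable {𝕜 E : Type*} [NontriviallyNormedField 𝕜] [NormedAddCommGroup E] [NormedSpace 𝕜 E]
  {m : ℕ} {f g : ℕ → E → 𝕜} (ℓ : 𝕜[X] →ₗ[𝕜] 𝕜)

theorem contDiffOn_map_ofCoeffs_mul {s : Set E} {N : WithTop ℕ∞}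
    (hf : ∀ k < m, ContDiffOn 𝕜 N (f k) s) (hg : ∀ k < m, ContDiffOn 𝕜 N (g k) s) :
    ContDiffOn 𝕜 N (fun y => ℓ (ofCoeffs m (f · y) * ofCoeffs m (g · y))) s := by
  simp only [map_ofCoeffs_mul, smul_eq_mul]
  refine ContDiffOn.sum fun a ha => ContDiffOn.sum fun b hb => ?_
  exact ((hf a (Finset.mem_range.1 ha)).mul (hg b (Finset.mem_range.1 hb))).mul contDiffOn_const

theorem fderiv_map_ofCoeffs_mul {x : E} (hf : ∀ k < m, DifferentiableAt 𝕜 (f k) x)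
    (hg : ∀ k < m, DifferentiableAt 𝕜 (g k) x) (v : E) :
    fderiv 𝕜 (fun y => ℓ (ofCoeffs m (f · y) * ofCoeffs m (g · y))) x v =
      ℓ (ofCoeffs m (fun k => fderiv 𝕜 (f k) x v) * ofCoeffs m (g · x) +
        ofCoeffs m (f · x) * ofCoeffs m (fun k => fderiv 𝕜 (g k) x v)) := by
  have hfg : ∀ a ∈ Finset.range m, ∀ b ∈ Finset.range m,
      DifferentiableAt 𝕜 (fun y => f a y * g b y) x := fun a ha b hb =>
    (hf a (Finset.mem_range.1 ha)).mul (hg b (Finset.mem_range.1 hb))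
  simp only [map_ofCoeffs_mul, smul_eq_mul, map_add]
  rw [fderiv_fun_sum fun a ha => DifferentiableAt.fun_sum fun b hb => (hfg a ha b hb).mul_const _]
  simp only [FunLike.coe_sum, Finset.sum_apply, ← Finset.sum_add_distrib]
  refine Finset.sum_congr rfl fun a ha => ?_
  rw [fderiv_fun_sum fun b hb => (hfg a ha b hb).mul_const _]
  simp only [FunLike.coe_sum, Finset.sum_apply]
  refine Finset.sum_congr rfl fun b hb => ?_
  rw [fderiv_mul_const (hfg a ha b hb),
    fderiv_fun_mul (hf a (Finset.mem_range.1 ha)) (hg b (Finset.mem_range.1 hb))]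
  simp only [smul_add, _root_.add_apply, _root_.smul_apply, smul_eq_mul]
  ring

end Calculus

end Polynomial

noncomputable def pencil {ι R : Type*} [DecidableEq ι] [CommRing R] (A : Matrix ι ι R) :
    Matrix ι ι R[X] :=
  Matrix.of fun i j => C (A i j) + if i = j then X else 0

theorem natDegree_pencil_le {ι R : Type*} [DecidableEq ι] [CommRing R] (A : Matrix ι ι R)
    (i j : ι) : (pencil A i j).natDegree ≤ 1 := by
  rw [pencil, Matrix.of_apply]
  refine (natDegree_add_le _ _).trans (max_le ((natDegree_C _).le.trans zero_le_one) ?_)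
  split_ifs
  · exact natDegree_X_le
  · simp

noncomputable def gradPoly {n : ℕ} (m : ℕ) (V : ℕ → (Fin n → ℝ) → ℝ) (x : Fin n → ℝ) :
    Fin n → ℝ[X] :=
  fun j => ofCoeffs m fun k => grad (V k) x j

theorem isStarSolution_iff {n m : ℕ} {Ω : Set (Fin n → ℝ)} {A : Matrix (Fin n) (Fin n) ℝ}
    {Z : ℝ[X]} {V : ℕ → (Fin n → ℝ) → ℝ} :
    IsStarSolution n m Ω A Z V ↔ (∀ k < m, ContDiffOn ℝ (⊤ : ℕ∞) (V k) Ω) ∧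
      ∀ x ∈ Ω, ∀ i, ∃ c : ℝ, (pencil A *ᵥ gradPoly m V x) i = Z * C c := by
  refine and_congr_right fun _ => ⟨fun ⟨u, hu⟩ x hx i => ⟨u x i, hu x hx i⟩, fun h => ?_⟩
  choose! u hu using h
  exact ⟨u, hu⟩

noncomputable def starProduct {R E : Type*} [CommRing R] (m : ℕ) (Z : R[X]) (V W : ℕ → E → R) :
    ℕ → E → R :=
  fun k x => ((ofCoeffs m (V · x) * ofCoeffs m (W · x)) %ₘ Z).coeff k

theorem gradPoly_starProduct {n m : ℕ} {Z : ℝ[X]} (hZ : Z.Monic) (hZm : Z.degree ≤ m)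
    {V W : ℕ → (Fin n → ℝ) → ℝ} {x : Fin n → ℝ} (hV : ∀ k < m, DifferentiableAt ℝ (V k) x)
    (hW : ∀ k < m, DifferentiableAt ℝ (W k) x) :
    gradPoly m (starProduct m Z V W) x = fun j =>
      (ofCoeffs m (W · x) • gradPoly m V x + ofCoeffs m (V · x) • gradPoly m W x) j %ₘ Z := by
  funext j
  refine Eq.trans ?_ (ofCoeffs_coeff ((degree_modByMonic_lt _ hZ).trans_le hZm))
  refine congrArg (ofCoeffs m) (funext fun k => ?_)
  refine (fderiv_map_ofCoeffs_mul (lcoeff ℝ k ∘ₗ modByMonicHom Z) hV hW _).trans ?_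
  rw [mul_comm]
  rfl

theorem stmt_6_general (n m : ℕ)
    (Ω : Set (Fin n → ℝ)) (hΩ : IsOpen Ω)
    (A : Matrix (Fin n) (Fin n) ℝ) (Zc : ℕ → ℝ)
    (Z : Polynomial ℝ) (hZ : Z = X ^ m + ∑ j ∈ Finset.range m, C (Zc j) * X ^ j)
    (V W : ℕ → ((Fin n → ℝ) → ℝ))
    (hV : IsStarSolution n m Ω A Z V) (hW : IsStarSolution n m Ω A Z W) :
    IsStarSolution n m Ω A Z
      (fun k x =>
        (((∑ j ∈ Finset.range m, C (V j x) * X ^ j) *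
            (∑ j ∈ Finset.range m, C (W j x) * X ^ j)) %ₘ Z).coeff k) := by
  replace hZ : Z = X ^ m + ofCoeffs m Zc := hZ
  have hZmonic : Z.Monic := hZ ▸ monic_X_pow_add (degree_ofCoeffs_lt m Zc)
  have hZdeg : Z.degree ≤ m :=
    hZ ▸ (degree_add_le _ _).trans (max_le (degree_X_pow_le m) (degree_ofCoeffs_lt m Zc).le)
  change IsStarSolution n m Ω A Z (starProduct m Z V W)
  rw [isStarSolution_iff] at hV hW ⊢
  refine ⟨fun k _ => contDiffOn_map_ofCoeffs_mul (lcoeff ℝ k ∘ₗ modByMonicHom Z) hV.1 hW.1,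
    fun x hx i => ?_⟩
  have hdiff : ∀ U : ℕ → (Fin n → ℝ) → ℝ, (∀ k < m, ContDiffOn ℝ (⊤ : ℕ∞) (U k) Ω) →
      ∀ k < m, DifferentiableAt ℝ (U k) x := fun U hU k hk =>
    ((hU k hk).contDiffAt (hΩ.mem_nhds hx)).differentiableAt (by simp)
  obtain ⟨a, ha⟩ := hV.2 x hx i
  obtain ⟨b, hb⟩ := hW.2 x hx i
  rw [gradPoly_starProduct hZmonic hZdeg (hdiff V hV.1) (hdiff W hW.1)]
  refine eq_mul_C_of_dvd_of_natDegree_le hZmonic (dvd_mulVec_modByMonic _ _ ?_)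
    (natDegree_mulVec_modByMonic_le _ _ hZmonic (natDegree_pencil_le A i))
  rw [mulVec_add, mulVec_smul, mulVec_smul, Pi.add_apply, Pi.smul_apply, Pi.smul_apply, ha, hb,
    smul_eq_mul, smul_eq_mul]
  exact dvd_add (dvd_mul_of_dvd_right (dvd_mul_right _ _) _)
    (dvd_mul_of_dvd_right (dvd_mul_right _ _) _)

/-- The *-multiplication (nonlinear superposition principle): for the system
`(A + μI)∇V_μ ≡ 0 (mod Z_μ)` with constant `A` and constant-coefficient monic
`Z(μ) = μ^m + Z_{m−1}μ^{m−1} + ⋯ + Z_0`, the solution space is closed under the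
product `(V*W)_μ = V_μ·W_μ mod Z_μ` taken pointwise. -/
theorem stmt_6 (n m : ℕ) (hn : 1 ≤ n) (hm : 1 ≤ m)
    (Ω : Set (Fin n → ℝ)) (hΩ : IsOpen Ω)
    (A : Matrix (Fin n) (Fin n) ℝ) (Zc : ℕ → ℝ)
    (Z : Polynomial ℝ) (hZ : Z = X ^ m + ∑ j ∈ Finset.range m, C (Zc j) * X ^ j)
    (V W : ℕ → ((Fin n → ℝ) → ℝ))
    (hV : IsStarSolution n m Ω A Z V) (hW : IsStarSolution n m Ω A Z W) :
    IsStarSolution n m Ω A Z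
      (fun k x =>
        (((∑ j ∈ Finset.range m, C (V j x) * X ^ j) *
            (∑ j ∈ Finset.range m, C (W j x) * X ^ j)) %ₘ Z).coeff k) :=
  stmt_6_general n m Ω hΩ A Zc Z hZ V W hV hW
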